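/- arXiv:math/0012052 — 7 statements merged into one kernel-verified Lean document; each statement's English description precedes it below -/
import Mathlib

section
/- Let K be a field, let H be a Hopf algebra over K, and let φ be a nonzero left integral on H. Then there exists a unique group-like element a₀ ∈ H (i.e., Δ a₀ = a₀ ⊗ a₀ and ε(a₀) = 1) such that (φ ⊗ id_H)(Δ a) = φ(a)·a₀ for all a ∈ H. Moreover, φ is also a right integral on H if and only if a₀ = 1_H. -/
open TensorProduct

/-- A left integral on a Hopf algebra (or bialgebra) `H` over `K`. -/
def IsLeftIntegral (K H : Type*) [CommRing K] [Ring H] [Bialgebra K H]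
    (φ : H →ₗ[K] K) : Prop :=
  ∀ a : H, (TensorProduct.rid K H) (LinearMap.lTensor H φ (Coalgebra.comul (R := K) a))
    = φ a • (1 : H)

/-- A right integral on a Hopf algebra (or bialgebra) `H` over `K`. -/
def IsRightIntegral (K H : Type*) [CommRing K] [Ring H] [Bialgebra K H]
    (φ : H →ₗ[K] K) : Prop :=
  ∀ a : H, (TensorProduct.lid K H) (LinearMap.rTensor H φ (Coalgebra.comul (R := K) a))
    = φ a • (1 : H)

/-- An element `a₀` of a Hopf algebra (or bialgebra) is group-like if
`Δ a₀ = a₀ ⊗ a₀` and `ε a₀ = 1`. -/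
def IsGroupLikeElemHopf (K : Type*) {H : Type*} [CommRing K] [Ring H] [Bialgebra K H]
    (a₀ : H) : Prop :=
  Coalgebra.comul (R := K) a₀ = a₀ ⊗ₜ[K] a₀ ∧ Coalgebra.counit (R := K) a₀ = 1

namespace HopfUniqAux

open Coalgebra LinearMap

variable {K H : Type*} [CommRing K] [Ring H] [HopfAlgebra K H]

noncomputable def CL (φ : H →ₗ[K] K) : H ⊗[K] H →ₗ[K] H :=
  (TensorProduct.lid K H).toLinearMap ∘ₗ LinearMap.rTensor H φ

noncomputable def CR (φ : H →ₗ[K] K) : H ⊗[K] H →ₗ[K] H :=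
  (TensorProduct.rid K H).toLinearMap ∘ₗ LinearMap.lTensor H φ

@[simp] lemma CL_tmul (φ : H →ₗ[K] K) (x y : H) : CL φ (x ⊗ₜ[K] y) = φ x • y := by
  simp [CL]

@[simp] lemma CR_tmul (φ : H →ₗ[K] K) (x y : H) : CR φ (x ⊗ₜ[K] y) = φ y • x := by
  simp [CR]

lemma sum_counit_left_smul {a : H} {ιr : Type*} (r : Coalgebra.Repr K a ιr) :
    ∑ i ∈ r.index, counit (R := K) (r.left i) • r.right i = a := by
  have h := Coalgebra.sum_counit_tmul_eq r
  have h2 := congrArg (TensorProduct.lid K H) h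
  rw [map_sum] at h2
  simp only [TensorProduct.lid_tmul] at h2
  simpa using h2

lemma sum_counit_right_smul {a : H} {ιr : Type*} (r : Coalgebra.Repr K a ιr) :
    ∑ i ∈ r.index, counit (R := K) (r.right i) • r.left i = a := by
  have h := Coalgebra.sum_tmul_counit_eq r
  have h2 := congrArg (TensorProduct.rid K H) h
  rw [map_sum] at h2
  simp only [TensorProduct.rid_tmul] at h2
  simpa using h2

lemma CL_comul {a : H} {ιr : Type*} (φ : H →ₗ[K] K) (r : Coalgebra.Repr K a ιr) :
    CL φ (comul (R := K) a) = ∑ i ∈ r.index, φ (r.left i) • r.right i := by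
  rw [← r.eq, map_sum]; simp

lemma CR_comul {a : H} {ιr : Type*} (φ : H →ₗ[K] K) (r : Coalgebra.Repr K a ιr) :
    CR φ (comul (R := K) a) = ∑ i ∈ r.index, φ (r.right i) • r.left i := by
  rw [← r.eq, map_sum]; simp

variable (φ : H →ₗ[K] K)

/-- The fundamental identity `∑ b₁ φ(a b₂) = ∑ S(a₁) φ(a₂ b)` for a left integral `φ`. -/
lemma star (hφ : ∀ x : H, CR φ (comul (R := K) x) = φ x • (1:H)) (a b : H) :
    CR (φ ∘ₗ LinearMap.mulLeft K a) (comul (R := K) b)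
      = HopfAlgebra.antipode (R := K) (CR (φ ∘ₗ LinearMap.mulRight K b) (comul (R := K) a)) := by
  classical
  set S : H →ₗ[K] H := HopfAlgebra.antipode (R := K) with hS
  set r : Coalgebra.Repr K a (H × H) := ℛ K a with hr
  set rL : (i : r.ι) → Coalgebra.Repr K (r.left i) (H × H) := fun i => ℛ K (r.left i) with hrL
  set rR : (i : r.ι) → Coalgebra.Repr K (r.right i) (H × H) := fun i => ℛ K (r.right i) with hrR
  set rb : Coalgebra.Repr K b (H × H) := ℛ K b with hrb
  -- the element ∑ S(a₁)a₂ ⊗ a₃ = 1 ⊗ a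
  have hG : ∑ i ∈ r.index, ∑ j ∈ (rR i).index,
      (S (r.left i) * (rR i).left j) ⊗ₜ[K] (rR i).right j = (1:H) ⊗ₜ[K] a := by
    have key := Coalgebra.sum_tmul_tmul_eq r rL rR
    have key2 := congrArg (LinearMap.rTensor H (LinearMap.mul' K H ∘ₗ LinearMap.rTensor H S)
      ∘ₗ (TensorProduct.assoc K H H H).symm.toLinearMap) key
    simp only [map_sum, LinearMap.comp_apply, LinearEquiv.coe_coe,
      TensorProduct.assoc_symm_tmul, LinearMap.rTensor_tmul, LinearMap.mul'_apply] at key2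
    rw [← key2]
    have inner : ∀ i ∈ r.index, ∑ j ∈ (rL i).index,
        (S ((rL i).left j) * (rL i).right j) ⊗ₜ[K] r.right i
        = (1:H) ⊗ₜ[K] (counit (R := K) (r.left i) • r.right i) := by
      intro i _
      rw [← TensorProduct.sum_tmul, HopfAlgebra.sum_antipode_mul_eq_smul (rL i)]
      rw [TensorProduct.smul_tmul]
    rw [Finset.sum_congr rfl inner, ← TensorProduct.tmul_sum, sum_counit_left_smul r]
  -- expand the right-hand side into a triple sum
  have hRHS : S (CR (φ ∘ₗ LinearMap.mulRight K b) (comul (R := K) a))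
      = ∑ i ∈ r.index, ∑ j ∈ (rR i).index, ∑ k ∈ rb.index,
          φ ((rR i).right j * rb.right k) • (S (r.left i) * ((rR i).left j * rb.left k)) := by
    rw [CR_comul _ r, map_sum]
    refine Finset.sum_congr rfl (fun i _ => ?_)
    rw [map_smul]
    have h1 : CR φ (comul (R := K) (r.right i * b)) = φ (r.right i * b) • (1:H) := hφ _
    have h2 : comul (R := K) (r.right i * b)
        = (∑ j ∈ (rR i).index, (rR i).left j ⊗ₜ[K] (rR i).right j)
          * (∑ k ∈ rb.index, rb.left k ⊗ₜ[K] rb.right k) := by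
      rw [(rR i).eq, rb.eq, Bialgebra.comul_mul]
    have h3 : CR φ (comul (R := K) (r.right i * b))
        = ∑ j ∈ (rR i).index, ∑ k ∈ rb.index,
            φ ((rR i).right j * rb.right k) • ((rR i).left j * rb.left k) := by
      rw [h2, Finset.sum_mul_sum, map_sum]
      refine Finset.sum_congr rfl (fun j _ => ?_)
      rw [map_sum]
      refine Finset.sum_congr rfl (fun k _ => ?_)
      rw [Algebra.TensorProduct.tmul_mul_tmul, CR_tmul]
    have h4 : φ (r.right i * b) • S (r.left i)
        = S (r.left i) * (φ (r.right i * b) • (1:H)) := by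
      rw [mul_smul_comm, mul_one]
    rw [LinearMap.comp_apply, LinearMap.mulRight_apply, h4, ← h1, h3, Finset.mul_sum]
    refine Finset.sum_congr rfl (fun j _ => ?_)
    rw [Finset.mul_sum]
    refine Finset.sum_congr rfl (fun k _ => ?_)
    rw [mul_smul_comm]
  -- now compute the left-hand side through `hG`
  have hbridge := congrArg (fun z : H ⊗[K] H => CR φ (z * comul (R := K) b)) hG
  beta_reduce at hbridge
  have hL : CR φ (((1:H) ⊗ₜ[K] a) * comul (R := K) b)
      = CR (φ ∘ₗ LinearMap.mulLeft K a) (comul (R := K) b) := by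
    rw [← rb.eq, Finset.mul_sum, map_sum, map_sum]
    refine Finset.sum_congr rfl (fun k _ => ?_)
    rw [Algebra.TensorProduct.tmul_mul_tmul, one_mul, CR_tmul, CR_tmul,
      LinearMap.comp_apply, LinearMap.mulLeft_apply]
  have hR : CR φ ((∑ i ∈ r.index, ∑ j ∈ (rR i).index,
        (S (r.left i) * (rR i).left j) ⊗ₜ[K] (rR i).right j) * comul (R := K) b)
      = ∑ i ∈ r.index, ∑ j ∈ (rR i).index, ∑ k ∈ rb.index,
          φ ((rR i).right j * rb.right k) • (S (r.left i) * ((rR i).left j * rb.left k)) := by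
    rw [← rb.eq, Finset.sum_mul, map_sum]
    refine Finset.sum_congr rfl (fun i _ => ?_)
    rw [Finset.sum_mul, map_sum]
    refine Finset.sum_congr rfl (fun j _ => ?_)
    rw [Finset.mul_sum, map_sum]
    refine Finset.sum_congr rfl (fun k _ => ?_)
    rw [Algebra.TensorProduct.tmul_mul_tmul, CR_tmul, mul_assoc]
  rw [← hL, ← hbridge, hR, hRHS]


section Convolution

variable {A : Type*} [Ring A] [Algebra K A]

/-- Convolution product of linear maps from a coalgebra to an algebra. -/
noncomputable def conv (f g : H →ₗ[K] A) : H →ₗ[K] A :=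
  LinearMap.mul' K A ∘ₗ TensorProduct.map f g ∘ₗ (Coalgebra.comul (R := K) (A := H))

lemma conv_apply_repr (f g : H →ₗ[K] A) {a : H} {ιr : Type*} (r : Coalgebra.Repr K a ιr) :
    conv f g a = ∑ i ∈ r.index, f (r.left i) * g (r.right i) := by
  rw [conv, LinearMap.comp_apply, LinearMap.comp_apply, ← r.eq, map_sum, map_sum]
  refine Finset.sum_congr rfl (fun i _ => ?_)
  rw [TensorProduct.map_tmul, LinearMap.mul'_apply]

/-- The unit for convolution. -/
noncomputable def convUnit : H →ₗ[K] A :=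
  (Algebra.linearMap K A) ∘ₗ (Coalgebra.counit (R := K) (A := H))

lemma convUnit_apply (a : H) :
    (convUnit : H →ₗ[K] A) a = counit (R := K) a • (1 : A) := by
  rw [convUnit, LinearMap.comp_apply, Algebra.linearMap_apply, Algebra.smul_def, mul_one]

lemma conv_unit_left (f : H →ₗ[K] A) : conv convUnit f = f := by
  ext a
  set r : Coalgebra.Repr K a (H × H) := ℛ K a
  rw [conv_apply_repr _ _ r]
  have : ∀ i ∈ r.index, (convUnit : H →ₗ[K] A) (r.left i) * f (r.right i)
      = f (counit (R := K) (r.left i) • r.right i) := by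
    intro i _
    rw [convUnit_apply, smul_mul_assoc, one_mul, map_smul]
  rw [Finset.sum_congr rfl this, ← map_sum, sum_counit_left_smul r]

lemma conv_unit_right (f : H →ₗ[K] A) : conv f convUnit = f := by
  ext a
  set r : Coalgebra.Repr K a (H × H) := ℛ K a
  rw [conv_apply_repr _ _ r]
  have : ∀ i ∈ r.index, f (r.left i) * (convUnit : H →ₗ[K] A) (r.right i)
      = f (counit (R := K) (r.right i) • r.left i) := by
    intro i _
    rw [convUnit_apply, mul_smul_comm, mul_one, map_smul]
  rw [Finset.sum_congr rfl this, ← map_sum, sum_counit_right_smul r]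

lemma conv_assoc (f g h : H →ₗ[K] A) : conv (conv f g) h = conv f (conv g h) := by
  ext a
  set r : Coalgebra.Repr K a (H × H) := ℛ K a with hr
  set rL : (i : r.ι) → Coalgebra.Repr K (r.left i) (H × H) := fun i => ℛ K (r.left i) with hrL
  set rR : (i : r.ι) → Coalgebra.Repr K (r.right i) (H × H) := fun i => ℛ K (r.right i) with hrR
  have key := Coalgebra.sum_tmul_tmul_eq r rL rR
  have key2 := congrArg (LinearMap.mul' K A ∘ₗ
    TensorProduct.map f (LinearMap.mul' K A ∘ₗ TensorProduct.map g h)) key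
  simp only [map_sum, LinearMap.comp_apply, TensorProduct.map_tmul,
    LinearMap.mul'_apply] at key2
  have hL : (conv (conv f g) h) a = ∑ i ∈ r.index, ∑ j ∈ (rL i).index,
      f ((rL i).left j) * (g ((rL i).right j) * h (r.right i)) := by
    rw [conv_apply_repr _ _ r]
    refine Finset.sum_congr rfl (fun i _ => ?_)
    rw [conv_apply_repr _ _ (rL i), Finset.sum_mul]
    refine Finset.sum_congr rfl (fun j _ => ?_)
    rw [mul_assoc]
  have hR : (conv f (conv g h)) a = ∑ i ∈ r.index, ∑ j ∈ (rR i).index,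
      f (r.left i) * (g ((rR i).left j) * h ((rR i).right j)) := by
    rw [conv_apply_repr _ _ r]
    refine Finset.sum_congr rfl (fun i _ => ?_)
    rw [conv_apply_repr _ _ (rR i), Finset.mul_sum]
  rw [hL, hR, key2]

end Convolution


/-- The antipode is an anti-coalgebra morphism: `Δ ∘ S = τ ∘ (S ⊗ S) ∘ Δ`. -/
lemma comul_antipode (a : H) :
    comul (R := K) (HopfAlgebra.antipode (R := K) (A := H) a)
      = (TensorProduct.comm K H H) (TensorProduct.map
          (HopfAlgebra.antipode (R := K)) (HopfAlgebra.antipode (R := K))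
          (comul (R := K) a)) := by
  classical
  set S : H →ₗ[K] H := HopfAlgebra.antipode (R := K) with hS
  set Δl : H →ₗ[K] H ⊗[K] H := Coalgebra.comul (R := K) (A := H) with hΔl
  set x : H →ₗ[K] H ⊗[K] H := Δl ∘ₗ S with hx
  set y : H →ₗ[K] H ⊗[K] H :=
    (TensorProduct.comm K H H).toLinearMap ∘ₗ TensorProduct.map S S ∘ₗ Δl with hy
  have h1 : conv Δl x = convUnit := by
    ext c
    set r : Coalgebra.Repr K c (H × H) := ℛ K c
    rw [conv_apply_repr _ _ r, convUnit_apply]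
    have : ∀ i ∈ r.index, Δl (r.left i) * x (r.right i)
        = Δl (r.left i * S (r.right i)) := by
      intro i _
      rw [hx, LinearMap.comp_apply, hΔl]
      exact (Bialgebra.comul_mul _ _).symm
    rw [Finset.sum_congr rfl this, ← map_sum, HopfAlgebra.sum_mul_antipode_eq_smul r,
      map_smul, hΔl, Bialgebra.comul_one]
  have h2 : conv y Δl = convUnit := by
    ext c
    set r : Coalgebra.Repr K c (H × H) := ℛ K c with hr
    set rL : (i : r.ι) → Coalgebra.Repr K (r.left i) (H × H) := fun i => ℛ K (r.left i) with hrL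
    set rR : (i : r.ι) → Coalgebra.Repr K (r.right i) (H × H) := fun i => ℛ K (r.right i) with hrR
    have key := Coalgebra.sum_tmul_tmul_eq r rL rR
    have key2 := congrArg (LinearMap.mul' K (H ⊗[K] H) ∘ₗ
      TensorProduct.map ((TensorProduct.comm K H H).toLinearMap ∘ₗ TensorProduct.map S S) Δl ∘ₗ
      (TensorProduct.assoc K H H H).symm.toLinearMap) key
    simp only [map_sum, LinearMap.comp_apply, LinearEquiv.coe_coe,
      TensorProduct.assoc_symm_tmul, TensorProduct.map_tmul, TensorProduct.comm_tmul,
      LinearMap.mul'_apply] at key2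
    -- key2 : ∑ i ∑ j (S (rL.right) ⊗ S (rL.left)) * Δl (r.right i)
    --      = ∑ i ∑ k (S (rR.left) ⊗ S (r.left i)) * Δl (rR.right)
    have hLHS : conv y Δl c
        = ∑ i ∈ r.index, ∑ j ∈ (rL i).index,
            (S ((rL i).right j) ⊗ₜ[K] S ((rL i).left j)) * Δl (r.right i) := by
      rw [conv_apply_repr _ _ r]
      refine Finset.sum_congr rfl (fun i _ => ?_)
      have : y (r.left i) = ∑ j ∈ (rL i).index,
          S ((rL i).right j) ⊗ₜ[K] S ((rL i).left j) := by
        rw [hy, LinearMap.comp_apply, LinearMap.comp_apply, hΔl, ← (rL i).eq, map_sum, map_sum]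
        refine Finset.sum_congr rfl (fun j _ => ?_)
        rw [TensorProduct.map_tmul, LinearEquiv.coe_coe, TensorProduct.comm_tmul]
      rw [this, Finset.sum_mul]
    have hRHS : ∀ i ∈ r.index, ∑ k ∈ (rR i).index,
        (S ((rR i).left k) ⊗ₜ[K] S (r.left i)) * Δl ((rR i).right k)
        = (1 : H) ⊗ₜ[K] (S (r.left i) * r.right i) := by
      intro i _
      set rRL : (k : (rR i).ι) → Coalgebra.Repr K ((rR i).left k) (H × H) :=
        fun k => ℛ K ((rR i).left k) with hrRL
      set rRR : (k : (rR i).ι) → Coalgebra.Repr K ((rR i).right k) (H × H) :=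
        fun k => ℛ K ((rR i).right k) with hrRR
      have keyi := Coalgebra.sum_tmul_tmul_eq (rR i) rRL rRR
      have keyi2 := congrArg (TensorProduct.map
          (LinearMap.mul' K H ∘ₗ LinearMap.rTensor H S)
          (LinearMap.mulLeft K (S (r.left i))) ∘ₗ
        (TensorProduct.assoc K H H H).symm.toLinearMap) keyi
      simp only [map_sum, LinearMap.comp_apply, LinearEquiv.coe_coe,
        TensorProduct.assoc_symm_tmul, TensorProduct.map_tmul, LinearMap.rTensor_tmul,
        LinearMap.mul'_apply, LinearMap.mulLeft_apply] at keyi2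
      -- keyi2 : ∑ k ∑ l (S c * d) ⊗ (S x_i * s_k) = ∑ k ∑ m (S g * e) ⊗ (S x_i * f)
      have hA : ∑ k ∈ (rR i).index, ∑ l ∈ (rRL k).index,
          (S ((rRL k).left l) * (rRL k).right l) ⊗ₜ[K] (S (r.left i) * (rR i).right k)
          = (1 : H) ⊗ₜ[K] (S (r.left i) * r.right i) := by
        have inner : ∀ k ∈ (rR i).index, ∑ l ∈ (rRL k).index,
            (S ((rRL k).left l) * (rRL k).right l) ⊗ₜ[K] (S (r.left i) * (rR i).right k)
            = (1:H) ⊗ₜ[K] (counit (R := K) ((rR i).left k) • (S (r.left i) * (rR i).right k)) := by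
          intro k _
          rw [← TensorProduct.sum_tmul, HopfAlgebra.sum_antipode_mul_eq_smul (rRL k),
            TensorProduct.smul_tmul]
        rw [Finset.sum_congr rfl inner, ← TensorProduct.tmul_sum]
        congr 1
        have : ∀ k ∈ (rR i).index,
            counit (R := K) ((rR i).left k) • (S (r.left i) * (rR i).right k)
            = S (r.left i) * (counit (R := K) ((rR i).left k) • (rR i).right k) := by
          intro k _; rw [mul_smul_comm]
        rw [Finset.sum_congr rfl this, ← Finset.mul_sum, sum_counit_left_smul (rR i)]
      have hB : ∀ k ∈ (rR i).index,
          ∑ m ∈ (rRR k).index,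
            (S ((rR i).left k) * (rRR k).left m) ⊗ₜ[K] (S (r.left i) * (rRR k).right m)
          = (S ((rR i).left k) ⊗ₜ[K] S (r.left i)) * Δl ((rR i).right k) := by
        intro k _
        rw [hΔl, ← (rRR k).eq, Finset.mul_sum]
        refine Finset.sum_congr rfl (fun m _ => ?_)
        rw [Algebra.TensorProduct.tmul_mul_tmul]
      rw [← Finset.sum_congr rfl hB, ← keyi2, hA]
    rw [hLHS, key2, Finset.sum_congr rfl hRHS, ← TensorProduct.tmul_sum,
      HopfAlgebra.sum_antipode_mul_eq_smul r, convUnit_apply]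
    rw [TensorProduct.tmul_smul, Algebra.TensorProduct.one_def]
  have sandwich : y = x := by
    have e1 : conv y (conv Δl x) = y := by rw [h1, conv_unit_right]
    have e2 : conv (conv y Δl) x = x := by rw [h2, conv_unit_left]
    rw [← e1, ← conv_assoc, e2]
  have := congrArg (fun F : H →ₗ[K] H ⊗[K] H => F a) sandwich.symm
  simpa [hx, hy, hΔl, hS] using this


/-- Collapsed form of `φ∘S` being a right integral, on a representation:
`∑ φ(S xᵢ) • S yᵢ = φ(S a) • 1`. -/
lemma lemB' (hφ : ∀ x : H, CR φ (comul (R := K) x) = φ x • (1:H)) {a : H} {ιr : Type*}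
    (r : Coalgebra.Repr K a ιr) :
    ∑ i ∈ r.index, φ (HopfAlgebra.antipode (R := K) (r.left i))
        • HopfAlgebra.antipode (R := K) (A := H) (r.right i)
      = φ (HopfAlgebra.antipode (R := K) a) • 1 := by
  set S : H →ₗ[K] H := HopfAlgebra.antipode (R := K) with hS
  have h1 := hφ (S a)
  rw [comul_antipode (K := K) a] at h1
  rw [← r.eq] at h1
  simp only [map_sum, TensorProduct.map_tmul, TensorProduct.comm_tmul, CR_tmul] at h1
  exact h1

/-- `φ ∘ S` is a right integral: `∑ φ(S a₁) • a₂ = φ(S a) • 1`. -/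
lemma lemB (hφ : ∀ x : H, CR φ (comul (R := K) x) = φ x • (1:H)) (a : H) :
    CL (φ ∘ₗ HopfAlgebra.antipode (R := K)) (comul (R := K) a)
      = φ (HopfAlgebra.antipode (R := K) a) • 1 := by
  classical
  set S : H →ₗ[K] H := HopfAlgebra.antipode (R := K) with hS
  set r : Coalgebra.Repr K a (H × H) := ℛ K a with hr
  set rL : (i : r.ι) → Coalgebra.Repr K (r.left i) (H × H) := fun i => ℛ K (r.left i) with hrL
  set rR : (i : r.ι) → Coalgebra.Repr K (r.right i) (H × H) := fun i => ℛ K (r.right i) with hrR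
  have key := Coalgebra.sum_tmul_tmul_eq r rL rR
  have key2 := congrArg (CL (φ ∘ₗ S) ∘ₗ
    LinearMap.lTensor H (LinearMap.mul' K H ∘ₗ LinearMap.rTensor H S)) key
  simp only [map_sum, LinearMap.comp_apply, LinearMap.lTensor_tmul,
    LinearMap.rTensor_tmul, LinearMap.mul'_apply, CL_tmul] at key2
  -- key2 : ∑ i ∑ j (φ∘S)(Lᵢⱼ) • (S Rᵢⱼ * yᵢ) = ∑ i ∑ k (φ∘S)(xᵢ) • (S gᵢₖ * hᵢₖ)
  have hLHS : ∑ i ∈ r.index, ∑ j ∈ (rL i).index,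
      φ (S ((rL i).left j)) • (S ((rL i).right j) * r.right i)
      = CL (φ ∘ₗ S) (comul (R := K) a) := by
    rw [CL_comul (φ ∘ₗ S) r]
    simp only [LinearMap.comp_apply]
    refine Finset.sum_congr rfl (fun i _ => ?_)
    have h6 : ∀ j ∈ (rL i).index,
        φ (S ((rL i).left j)) • (S ((rL i).right j) * r.right i)
        = (φ (S ((rL i).left j)) • S ((rL i).right j)) * r.right i := by
      intro j _; rw [smul_mul_assoc]
    rw [Finset.sum_congr rfl h6, ← Finset.sum_mul]
    rw [lemB' φ hφ (rL i), smul_mul_assoc, one_mul]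
  have hRHS : ∑ i ∈ r.index, ∑ k ∈ (rR i).index,
      φ (S (r.left i)) • (S ((rR i).left k) * (rR i).right k)
      = φ (S a) • 1 := by
    have h7 : ∀ i ∈ r.index, ∑ k ∈ (rR i).index,
        φ (S (r.left i)) • (S ((rR i).left k) * (rR i).right k)
        = (counit (R := K) (r.right i) * φ (S (r.left i))) • 1 := by
      intro i _
      rw [← Finset.smul_sum, HopfAlgebra.sum_antipode_mul_eq_smul (rR i), smul_smul,
        mul_comm]
    rw [Finset.sum_congr rfl h7]
    have h8 : ∑ i ∈ r.index, (counit (R := K) (r.right i) * φ (S (r.left i))) • (1:H)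
        = (φ (S (∑ i ∈ r.index, counit (R := K) (r.right i) • r.left i))) • 1 := by
      rw [map_sum, map_sum, Finset.sum_smul]
      refine Finset.sum_congr rfl (fun i _ => ?_)
      rw [map_smul, map_smul, smul_eq_mul]
    rw [h8, sum_counit_right_smul r]
  rw [← hLHS, key2, hRHS]

/-- The master identity: `φ(a · T(x)) = φ(S a) · φ(x)` where `T(x) = ∑ φ(x₁) x₂`. -/
lemma master (hφ : ∀ x : H, CR φ (comul (R := K) x) = φ x • (1:H)) (a x : H) :
    φ (a * CL φ (comul (R := K) x))
      = φ (HopfAlgebra.antipode (R := K) a) * φ x := by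
  classical
  set S : H →ₗ[K] H := HopfAlgebra.antipode (R := K) with hS
  set r : Coalgebra.Repr K a (H × H) := ℛ K a with hr
  set rx : Coalgebra.Repr K x (H × H) := ℛ K x with hrx
  have h1 : φ (a * CL φ (comul (R := K) x))
      = ∑ j ∈ rx.index, φ (a * rx.right j) * φ (rx.left j) := by
    rw [CL_comul φ rx, Finset.mul_sum, map_sum]
    refine Finset.sum_congr rfl (fun j _ => ?_)
    rw [mul_smul_comm, map_smul, smul_eq_mul, mul_comm]
  have h3 : φ (CR (φ ∘ₗ LinearMap.mulLeft K a) (comul (R := K) x))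
      = ∑ j ∈ rx.index, φ (a * rx.right j) * φ (rx.left j) := by
    rw [CR_comul _ rx, map_sum]
    refine Finset.sum_congr rfl (fun j _ => ?_)
    rw [map_smul, smul_eq_mul, LinearMap.comp_apply, LinearMap.mulLeft_apply]
  have h4 : φ (S (CR (φ ∘ₗ LinearMap.mulRight K x) (comul (R := K) a)))
      = ∑ i ∈ r.index, φ (S (r.left i)) * φ (r.right i * x) := by
    rw [CR_comul _ r, map_sum, map_sum]
    refine Finset.sum_congr rfl (fun i _ => ?_)
    rw [map_smul, map_smul, smul_eq_mul, LinearMap.comp_apply, LinearMap.mulRight_apply,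
      mul_comm]
  have h5 : ∑ i ∈ r.index, φ (S (r.left i)) * φ (r.right i * x) = φ (S a) * φ x := by
    have hB := lemB φ hφ a
    rw [CL_comul (φ ∘ₗ S) r] at hB
    have := congrArg (fun z : H => φ (z * x)) hB
    simp only [Finset.sum_mul, smul_mul_assoc, map_sum, map_smul, smul_eq_mul,
      one_mul, LinearMap.comp_apply] at this
    exact this
  rw [h1, ← h3, star φ hφ a x, h4, h5]


lemma exists_basis_expansion {ι : Type*} (ℬ : Module.Basis ι K H) (u : H ⊗[K] H) :
    ∃ (s : Finset ι) (v : ι → H), u = ∑ i ∈ s, ℬ i ⊗ₜ[K] v i := by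
  classical
  induction u with
  | zero => exact ⟨∅, fun _ => 0, by simp⟩
  | tmul x y =>
      refine ⟨(ℬ.repr x).support, fun i => (ℬ.repr x) i • y, ?_⟩
      have hx : (∑ i ∈ (ℬ.repr x).support, (ℬ.repr x) i • ℬ i) = x := by
        conv_rhs => rw [← ℬ.linearCombination_repr x]
        rw [Finsupp.linearCombination_apply, Finsupp.sum]
      calc x ⊗ₜ[K] y = (∑ i ∈ (ℬ.repr x).support, (ℬ.repr x) i • ℬ i) ⊗ₜ[K] y := by rw [hx]
        _ = ∑ i ∈ (ℬ.repr x).support, ((ℬ.repr x) i • ℬ i) ⊗ₜ[K] y := by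
              rw [TensorProduct.sum_tmul]
        _ = ∑ i ∈ (ℬ.repr x).support, ℬ i ⊗ₜ[K] ((ℬ.repr x) i • y) := by
              refine Finset.sum_congr rfl (fun i _ => ?_)
              rw [TensorProduct.smul_tmul]
  | add u1 u2 h1 h2 =>
      obtain ⟨s1, v1, hv1⟩ := h1
      obtain ⟨s2, v2, hv2⟩ := h2
      refine ⟨s1 ∪ s2, fun i => (if i ∈ s1 then v1 i else 0) + (if i ∈ s2 then v2 i else 0), ?_⟩
      have e1 : ∑ i ∈ s1 ∪ s2, ℬ i ⊗ₜ[K] (if i ∈ s1 then v1 i else 0)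
          = ∑ i ∈ s1, ℬ i ⊗ₜ[K] v1 i := by
        rw [← Finset.sum_subset Finset.subset_union_left
          (fun i _ hi => by rw [if_neg hi, TensorProduct.tmul_zero])]
        exact Finset.sum_congr rfl (fun i hi => by rw [if_pos hi])
      have e2 : ∑ i ∈ s1 ∪ s2, ℬ i ⊗ₜ[K] (if i ∈ s2 then v2 i else 0)
          = ∑ i ∈ s2, ℬ i ⊗ₜ[K] v2 i := by
        rw [← Finset.sum_subset Finset.subset_union_right
          (fun i _ hi => by rw [if_neg hi, TensorProduct.tmul_zero])]
        exact Finset.sum_congr rfl (fun i hi => by rw [if_pos hi])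
      have : ∑ i ∈ s1 ∪ s2, ℬ i ⊗ₜ[K]
            ((if i ∈ s1 then v1 i else 0) + (if i ∈ s2 then v2 i else 0))
          = (∑ i ∈ s1 ∪ s2, ℬ i ⊗ₜ[K] (if i ∈ s1 then v1 i else 0))
            + ∑ i ∈ s1 ∪ s2, ℬ i ⊗ₜ[K] (if i ∈ s2 then v2 i else 0) := by
        rw [← Finset.sum_add_distrib]
        exact Finset.sum_congr rfl (fun i _ => TensorProduct.tmul_add _ _ _)
      rw [this, e1, e2, hv1, hv2]

/-- If `φ(H·b) = 0` then the right tensor legs of `Δb` can be chosen in the same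
annihilator. -/
lemma N_legs {ι : Type*} (ℬ : Module.Basis ι K H)
    (hφ : ∀ x : H, CR φ (comul (R := K) x) = φ x • (1:H))
    {b : H} (hb : ∀ a : H, φ (a * b) = 0) :
    ∃ (s : Finset ι) (v : ι → H), comul (R := K) b = ∑ i ∈ s, ℬ i ⊗ₜ[K] v i ∧
      ∀ i ∈ s, ∀ a : H, φ (a * v i) = 0 := by
  classical
  obtain ⟨s, v, hsv⟩ := exists_basis_expansion ℬ (comul (R := K) b)
  refine ⟨s, v, hsv, fun i hi a => ?_⟩
  have hmap : (φ ∘ₗ LinearMap.mulRight K b) = 0 := by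
    ext z
    simp only [LinearMap.comp_apply, LinearMap.mulRight_apply, LinearMap.zero_apply]
    exact hb z
  have h0 : CR (φ ∘ₗ LinearMap.mulLeft K a) (comul (R := K) b) = 0 := by
    rw [star φ hφ a b, hmap]
    simp [CR]
  rw [hsv] at h0
  simp only [map_sum, CR_tmul, LinearMap.comp_apply, LinearMap.mulLeft_apply] at h0
  exact _root_.linearIndependent_iff'.mp ℬ.linearIndependent s
    (fun i => φ (a * v i)) h0 i hi


section FieldCase

variable {K' H' : Type*} [Field K'] [Ring H'] [HopfAlgebra K' H'] (ψ : H' →ₗ[K'] K')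

lemma N_counit_eq_zero (hφ : ∀ x : H', CR ψ (comul (R := K') x) = ψ x • (1:H'))
    (hne : ψ ≠ 0) {v : H'} (hv : ∀ a : H', ψ (a * v) = 0) :
    counit (R := K') v = 0 := by
  classical
  obtain ⟨a0, ha0⟩ : ∃ a, ψ a ≠ 0 := by
    by_contra h
    push_neg at h
    exact hne (LinearMap.ext fun z => h z)
  set ℬ : Module.Basis _ K' H' := Module.Basis.ofVectorSpace K' H' with hℬ
  obtain ⟨s, w, hsw, hw⟩ := N_legs ψ ℬ hφ hv
  have key : counit (R := K') v • (1:H')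
      = ∑ i ∈ s, HopfAlgebra.antipode (R := K') (ℬ i) * w i := by
    have h1 := HopfAlgebra.mul_antipode_rTensor_comul_apply (R := K') v
    rw [hsw] at h1
    simp only [map_sum, LinearMap.rTensor_tmul, LinearMap.mul'_apply] at h1
    rw [h1, Algebra.algebraMap_eq_smul_one]
  have h2 : counit (R := K') v * ψ a0 = 0 := by
    have h3 := congrArg (fun z : H' => ψ (a0 * z)) key
    simp only [mul_smul_comm, mul_one, map_smul, smul_eq_mul] at h3
    rw [Finset.mul_sum, map_sum] at h3
    have h4 : ∀ i ∈ s, ψ (a0 * (HopfAlgebra.antipode (R := K') (ℬ i) * w i)) = 0 := by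
      intro i hi
      rw [← mul_assoc]
      exact hw i hi _
    rw [Finset.sum_congr rfl h4, Finset.sum_const_zero] at h3
    exact h3
  exact (mul_eq_zero.mp h2).resolve_right ha0

/-- Nondegeneracy: if `φ(H·b) = 0` then `b = 0`. -/
lemma N_eq_zero (hφ : ∀ x : H', CR ψ (comul (R := K') x) = ψ x • (1:H'))
    (hne : ψ ≠ 0) {b : H'} (hb : ∀ a : H', ψ (a * b) = 0) : b = 0 := by
  classical
  set ℬ : Module.Basis _ K' H' := Module.Basis.ofVectorSpace K' H' with hℬ
  obtain ⟨s, v, hsv, hv⟩ := N_legs ψ ℬ hφ hb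
  have hε : ∀ i ∈ s, counit (R := K') (v i) = 0 := fun i hi =>
    N_counit_eq_zero ψ hφ hne (hv i hi)
  have h := Coalgebra.lTensor_counit_comul (R := K') b
  rw [hsv] at h
  simp only [map_sum, LinearMap.lTensor_tmul] at h
  have h2 := congrArg (TensorProduct.rid K' H') h
  simp only [map_sum, TensorProduct.rid_tmul] at h2
  rw [Finset.sum_congr rfl (fun i hi => by rw [hε i hi, zero_smul])] at h2
  rw [Finset.sum_const_zero] at h2
  simpa using h2.symm

/-- The key theorem: `T(x) = φ(x) • T(t)` for any `t` with `φ t = 1`. -/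
lemma T_eq_smul (hφ : ∀ x : H', CR ψ (comul (R := K') x) = ψ x • (1:H'))
    (hne : ψ ≠ 0) {t : H'} (ht : ψ t = 1) (x : H') :
    CL ψ (comul (R := K') x) = ψ x • CL ψ (comul (R := K') t) := by
  have key : ∀ a : H',
      ψ (a * (CL ψ (comul (R := K') x) - ψ x • CL ψ (comul (R := K') t))) = 0 := by
    intro a
    rw [mul_sub, map_sub, mul_smul_comm, map_smul, smul_eq_mul]
    rw [master ψ hφ a x, master ψ hφ a t, ht, mul_one]
    ring
  have := N_eq_zero ψ hφ hne key
  rwa [sub_eq_zero] at this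

end FieldCase


section Final

variable {K' H' : Type*} [Field K'] [Ring H'] [HopfAlgebra K' H'] (ψ : H' →ₗ[K'] K')

/-- `ε(T t) = ψ t`. -/
lemma counit_CL (t : H') : counit (R := K') (CL ψ (comul (R := K') t)) = ψ t := by
  classical
  set rt : Coalgebra.Repr K' t (H' × H') := ℛ K' t with hrt
  rw [CL_comul ψ rt, map_sum]
  have : ∀ j ∈ rt.index, counit (R := K') (ψ (rt.left j) • rt.right j)
      = ψ (counit (R := K') (rt.right j) • rt.left j) := by
    intro j _
    rw [map_smul, map_smul, smul_eq_mul, smul_eq_mul, mul_comm]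
  rw [Finset.sum_congr rfl this, ← map_sum, sum_counit_right_smul rt]

/-- Group-likeness of `a₀ = T t`, given the main identity. -/
lemma comul_a0 (hφ : ∀ x : H', CR ψ (comul (R := K') x) = ψ x • (1:H'))
    (hne : ψ ≠ 0) {t : H'} (ht : ψ t = 1) :
    comul (R := K') (CL ψ (comul (R := K') t))
      = CL ψ (comul (R := K') t) ⊗ₜ[K'] CL ψ (comul (R := K') t) := by
  classical
  set a0 : H' := CL ψ (comul (R := K') t) with ha0
  set rt : Coalgebra.Repr K' t (H' × H') := ℛ K' t with hrt
  set rtL : (i : rt.ι) → Coalgebra.Repr K' (rt.left i) (H' × H') := fun i => ℛ K' (rt.left i) with hrtL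
  set rtR : (i : rt.ι) → Coalgebra.Repr K' (rt.right i) (H' × H') := fun i => ℛ K' (rt.right i) with hrtR
  have key := Coalgebra.sum_tmul_tmul_eq rt rtL rtR
  have key2 := congrArg ((TensorProduct.lid K' (H' ⊗[K'] H')).toLinearMap ∘ₗ
    LinearMap.rTensor (H' ⊗[K'] H') ψ) key
  simp only [map_sum, LinearMap.comp_apply, LinearMap.rTensor_tmul, LinearEquiv.coe_coe,
    TensorProduct.lid_tmul] at key2
  -- key2 : ∑ j ∑ k ψ(p) • (q ⊗ y) = ∑ j ∑ m ψ(x) • (g ⊗ h)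
  have e1 : comul (R := K') a0 = ∑ j ∈ rt.index, ∑ m ∈ (rtR j).index,
      ψ (rt.left j) • ((rtR j).left m ⊗ₜ[K'] (rtR j).right m) := by
    rw [ha0, CL_comul ψ rt, map_sum]
    refine Finset.sum_congr rfl (fun j _ => ?_)
    rw [map_smul, ← (rtR j).eq, Finset.smul_sum]
  have e2 : comul (R := K') a0 = ∑ j ∈ rt.index, ∑ k ∈ (rtL j).index,
      ψ ((rtL j).left k) • ((rtL j).right k ⊗ₜ[K'] rt.right j) := by
    rw [e1, ← key2]
  have e3 : ∀ j ∈ rt.index, ∑ k ∈ (rtL j).index,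
      ψ ((rtL j).left k) • ((rtL j).right k ⊗ₜ[K'] rt.right j)
      = (ψ (rt.left j) • a0) ⊗ₜ[K'] rt.right j := by
    intro j _
    have : ∑ k ∈ (rtL j).index,
        ψ ((rtL j).left k) • ((rtL j).right k ⊗ₜ[K'] rt.right j)
        = (∑ k ∈ (rtL j).index, ψ ((rtL j).left k) • (rtL j).right k) ⊗ₜ[K'] rt.right j := by
      rw [TensorProduct.sum_tmul]
      exact Finset.sum_congr rfl (fun k _ => by rw [TensorProduct.smul_tmul'])
    rw [this, ← CL_comul ψ (rtL j), T_eq_smul ψ hφ hne ht]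
  have e4 : comul (R := K') a0 = ∑ j ∈ rt.index, a0 ⊗ₜ[K'] (ψ (rt.left j) • rt.right j) := by
    rw [e2, Finset.sum_congr rfl e3]
    refine Finset.sum_congr rfl (fun j _ => ?_)
    rw [TensorProduct.smul_tmul]
  rw [e4, ← TensorProduct.tmul_sum, ← CL_comul ψ rt]

end Final

end HopfUniqAux

/-- Let `φ` be a nonzero left integral on a Hopf algebra `H` over a field `K`.  Then there
is a unique group-like element `a₀ ∈ H` with `(φ ⊗ id_H)(Δ a) = φ(a) • a₀` for all `a`;
moreover, for any such `a₀`, `φ` is also a right integral if and only if `a₀ = 1`. -/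
theorem exists_unique_groupLike_of_leftIntegral
    (K H : Type*) [Field K] [Ring H] [HopfAlgebra K H]
    (φ : H →ₗ[K] K) (hφ : IsLeftIntegral K H φ) (hne : φ ≠ 0) :
    (∃! a₀ : H, IsGroupLikeElemHopf K a₀ ∧
        ∀ a : H, (TensorProduct.lid K H) (LinearMap.rTensor H φ (Coalgebra.comul (R := K) a))
          = φ a • a₀) ∧
      ∀ a₀ : H, (IsGroupLikeElemHopf K a₀ ∧
          ∀ a : H, (TensorProduct.lid K H) (LinearMap.rTensor H φ (Coalgebra.comul (R := K) a))
            = φ a • a₀) →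
        (IsRightIntegral K H φ ↔ a₀ = 1) := by
  classical
  -- translate hypotheses into the auxiliary notation
  have hφ' : ∀ x : H, HopfUniqAux.CR φ (Coalgebra.comul (R := K) x) = φ x • (1:H) := by
    intro x
    simpa [HopfUniqAux.CR] using hφ x
  have hCL : ∀ a : H, (TensorProduct.lid K H) (LinearMap.rTensor H φ (Coalgebra.comul (R := K) a))
      = HopfUniqAux.CL φ (Coalgebra.comul (R := K) a) := by
    intro a
    simp [HopfUniqAux.CL]
  -- a normalized element
  obtain ⟨s0, hs0⟩ : ∃ s0 : H, φ s0 ≠ 0 := by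
    by_contra h
    push_neg at h
    exact hne (LinearMap.ext fun z => h z)
  set t : H := (φ s0)⁻¹ • s0 with htdef
  have ht : φ t = 1 := by
    rw [htdef, map_smul, smul_eq_mul, inv_mul_cancel₀ hs0]
  set a0 : H := HopfUniqAux.CL φ (Coalgebra.comul (R := K) t) with ha0
  have hmain : ∀ x : H, HopfUniqAux.CL φ (Coalgebra.comul (R := K) x) = φ x • a0 :=
    fun x => HopfUniqAux.T_eq_smul φ hφ' hne ht x
  have hmain' : ∀ x : H, (TensorProduct.lid K H)
      (LinearMap.rTensor H φ (Coalgebra.comul (R := K) x)) = φ x • a0 := by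
    intro x
    rw [hCL, hmain]
  have hgl : IsGroupLikeElemHopf K a0 := by
    constructor
    · rw [ha0]
      exact HopfUniqAux.comul_a0 φ hφ' hne ht
    · rw [ha0, HopfUniqAux.counit_CL φ t, ht]
  constructor
  · refine ⟨a0, ⟨hgl, hmain'⟩, ?_⟩
    rintro y ⟨-, hy⟩
    have h1 : (TensorProduct.lid K H) (LinearMap.rTensor H φ (Coalgebra.comul (R := K) t))
        = φ t • y := hy t
    rw [hmain' t, ht, one_smul, one_smul] at h1
    exact h1.symm
  · rintro b ⟨-, hb⟩
    constructor
    · intro hR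
      have h1 := hb t
      have h2 := hR t
      rw [ht, one_smul] at h1 h2
      rw [← h1, h2]
    · intro hb1
      intro x
      rw [hb x, hb1]
end

section
/- Let K be a field, let A and B be Hopf algebras over K, and let f : A → B be an injective homomorphism of Hopf algebras (a K-algebra homomorphism which is also a coalgebra homomorphism). If φ is a left integral on B, then φ ∘ f is a left integral on A. -/
open TensorProduct

/-- Let `A`, `B` be Hopf algebras over a field `K` and let `f : A → B` be an injective
homomorphism of Hopf algebras, i.e. a `K`-algebra homomorphism which is also a coalgebra
homomorphism (`Δ_B ∘ f = (f ⊗ f) ∘ Δ_A` and `ε_B ∘ f = ε_A`).  If `φ` is a left integral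
on `B`, then `φ ∘ f` is a left integral on `A`. -/
theorem isLeftIntegral_comp_of_injective_hopfHom
    (K A B : Type*) [Field K] [Ring A] [Ring B] [HopfAlgebra K A] [HopfAlgebra K B]
    (f : A →ₐ[K] B) (hinj : Function.Injective f)
    (hcomul : Coalgebra.comul (R := K) ∘ₗ f.toLinearMap
      = TensorProduct.map f.toLinearMap f.toLinearMap ∘ₗ Coalgebra.comul (R := K))
    (hcounit : Coalgebra.counit (R := K) ∘ₗ f.toLinearMap = Coalgebra.counit (R := K))
    (φ : B →ₗ[K] K) (hφ : IsLeftIntegral K B φ) :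
    IsLeftIntegral K A (φ ∘ₗ f.toLinearMap) := by
  intro a
  apply hinj
  rw [map_smul, map_one]
  have key : ∀ x : A ⊗[K] A,
      f ((TensorProduct.rid K A) (LinearMap.lTensor A (φ ∘ₗ f.toLinearMap) x))
        = (TensorProduct.rid K B) (LinearMap.lTensor B φ
            (TensorProduct.map f.toLinearMap f.toLinearMap x)) := by
    intro x
    induction x using TensorProduct.induction_on with
    | zero => simp
    | tmul a b => simp
    | add x y hx hy => simp [hx, hy]
  rw [key]
  have h := LinearMap.congr_fun hcomul a
  simp only [LinearMap.comp_apply] at h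
  rw [← h]
  exact hφ (f a)
end

section
/- Let R be a ring with unit, let S be a subring of R containing the unit of R, let α be a ring automorphism of S, and let ⟨ , ⟩ : R × R → S be an α⁻¹-associative form admitting a dual free pair {x₁, …, xₙ}, {y₁, …, yₙ}. Then {x₁, …, xₙ} is a basis of R as a left S-module, {y₁, …, yₙ} is a basis of R as a right S-module, and the form ⟨ , ⟩ is non-degenerate (its left radical {x ∈ R : ⟨x, y⟩ = 0 for all y ∈ R} and its right radical {y ∈ R : ⟨x, y⟩ = 0 for all x ∈ R} are both zero). -/
/-- A `β`-associative form from `R` to `S`: a biadditive map `⟨ , ⟩ : R × R → S` with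
`⟨s x, y⟩ = s ⟨x, y⟩`, `⟨x r, y⟩ = ⟨x, r y⟩` and `⟨x, y s⟩ = ⟨x, y⟩ β(s)`. -/
def IsAssocForm {R : Type*} [Ring R] (S : Subring R) (β : S →+* S)
    (B : R → R → S) : Prop :=
  (∀ x x' y : R, B (x + x') y = B x y + B x' y) ∧
  (∀ x y y' : R, B x (y + y') = B x y + B x y') ∧
  (∀ (s : S) (x y : R), B ((s : R) * x) y = s * B x y) ∧
  (∀ x r y : R, B (x * r) y = B x (r * y)) ∧
  (∀ (x y : R) (s : S), B x (y * (s : R)) = B x y * β s)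

/-- Let `α` be a ring automorphism of a subring `S` of `R`, and let `⟨ , ⟩` be an
`α⁻¹`-associative form from `R` to `S` admitting a dual free pair `{x₁,…,xₙ}`,
`{y₁,…,yₙ}` (i.e. `R = Σᵢ S xᵢ = Σᵢ yᵢ S` and `⟨xᵢ, yⱼ⟩ = δᵢⱼ`).  Then the `xᵢ` form a
basis of `R` as a left `S`-module, the `yᵢ` form a basis of `R` as a right `S`-module,
and the form is non-degenerate (its left and right radicals vanish). -/
theorem dualFreePair_basis_and_nondegenerate
    {R : Type*} [Ring R] (S : Subring R) (α : S ≃+* S)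
    (B : R → R → S) (hB : IsAssocForm S (α.symm : S →+* S) B)
    (n : ℕ) (x y : Fin n → R)
    (hx : ∀ r : R, ∃ c : Fin n → S, r = ∑ i, ((c i : R) * x i))
    (hy : ∀ r : R, ∃ c : Fin n → S, r = ∑ i, (y i * (c i : R)))
    (hdual : ∀ i j, B (x i) (y j) = if i = j then 1 else 0) :
    (∀ r : R, ∃! c : Fin n → S, r = ∑ i, ((c i : R) * x i)) ∧
      (∀ r : R, ∃! c : Fin n → S, r = ∑ i, (y i * (c i : R))) ∧
      (∀ a : R, (∀ b : R, B a b = 0) → a = 0) ∧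
      (∀ b : R, (∀ a : R, B a b = 0) → b = 0) := by
  obtain ⟨hadd1, hadd2, hsmul, _hmid, hsmul2⟩ := hB
  -- additive homs in each variable
  have hL : ∀ b : R, ∀ (m : ℕ) (f : Fin m → R),
      B (∑ i, f i) b = ∑ i, B (f i) b := by
    intro b m f
    exact map_sum (AddMonoidHom.mk' (fun r => B r b) (fun u v => hadd1 u v b)) f _
  have hR : ∀ a : R, ∀ (m : ℕ) (f : Fin m → R),
      B a (∑ i, f i) = ∑ i, B a (f i) := by
    intro a m f
    exact map_sum (AddMonoidHom.mk' (fun r => B a r) (fun u v => hadd2 a u v)) f _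
  -- key computations
  have key1 : ∀ (c : Fin n → S) (j : Fin n),
      B (∑ i, ((c i : R) * x i)) (y j) = c j := by
    intro c j
    rw [hL]
    have : ∀ i, B ((c i : R) * x i) (y j) = if i = j then c i else 0 := by
      intro i
      rw [hsmul, hdual]
      split <;> simp
    simp only [this]
    simp
  have key2 : ∀ (c : Fin n → S) (i : Fin n),
      B (x i) (∑ j, (y j * (c j : R))) = α.symm (c i) := by
    intro c i
    rw [hR]
    have : ∀ j, B (x i) (y j * (c j : R)) = if j = i then α.symm (c j) else 0 := by
      intro j
      rw [hsmul2, hdual]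
      split
      · simp [*]
      · next h => rw [zero_mul, if_neg (fun h2 => h h2.symm)]
    simp only [this]
    simp
  refine ⟨?_, ?_, ?_, ?_⟩
  · intro r
    obtain ⟨c, hc⟩ := hx r
    refine ⟨c, hc, ?_⟩
    intro d hd
    funext j
    have := key1 d j
    rw [← hd, hc, key1] at this
    exact this.symm
  · intro r
    obtain ⟨c, hc⟩ := hy r
    refine ⟨c, hc, ?_⟩
    intro d hd
    funext i
    have := key2 d i
    rw [← hd, hc, key2] at this
    exact α.symm.injective this.symm
  · intro a ha
    obtain ⟨c, hc⟩ := hx a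
    have : ∀ j, c j = 0 := fun j => by
      have := key1 c j; rw [← hc, ha] at this; exact this.symm
    simp [hc, this]
  · intro b hb
    obtain ⟨c, hc⟩ := hy b
    have : ∀ i, c i = 0 := fun i => by
      have := key2 c i
      rw [← hc, hb] at this
      have := α.symm.injective (this.symm.trans (map_zero _).symm)
      exact this
    simp [hc, this]
end

section
/- Let R be a ring with unit, let S be a subring of R containing the unit of R, and let α be a ring automorphism of S. Then the following two statements are equivalent: (a) R is a finitely generated free left S-module, and there exists an additive bijection φ_ℓ from R onto the set of additive maps f : R → S satisfying f(s r) = α(s) f(r) for all s ∈ S, r ∈ R, such that φ_ℓ(r x s)(w) = φ_ℓ(x)(w r) s for all r, w, x ∈ R and s ∈ S (i.e., φ_ℓ is an isomorphism of (R,S)-bimodules R → Hom_S^ℓ(R, _αS)); (b) there exists an α⁻¹-associative form ⟨ , ⟩ from R to S relative to which a dual free pair {x₁, …, xₙ}, {y₁, …, yₙ} exists. -/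
/-- `f : R → S` is an element of `Hom_S^ℓ(R, _αS)`:
an additive map with `f(s r) = α(s) f(r)`. -/
def IsLeftSHom {R : Type*} [Ring R] (S : Subring R) (α : S ≃+* S) (f : R → S) : Prop :=
  (∀ r r' : R, f (r + r') = f r + f r') ∧
  (∀ (s : S) (r : R), f ((s : R) * r) = α s * f r)

/-- `φ` (viewed as a map `R → Hom_S^ℓ(R, _αS)`) is an additive bijection of `R` onto
`Hom_S^ℓ(R, _αS)` satisfying the `(R,S)`-bimodule condition
`φ(r x s)(w) = φ(x)(w r) s`. -/
def IsLeftFrobeniusIso {R : Type*} [Ring R] (S : Subring R) (α : S ≃+* S)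
    (φ : R → R → S) : Prop :=
  (∀ x : R, IsLeftSHom S α (φ x)) ∧
  (∀ x x' w : R, φ (x + x') w = φ x w + φ x' w) ∧
  Function.Injective φ ∧
  (∀ f : R → S, IsLeftSHom S α f → ∃ x : R, φ x = f) ∧
  (∀ (r x : R) (s : S) (w : R), φ (r * x * (s : R)) w = φ x (w * r) * s)

/-- `R` is a free `α`-Frobenius extension of `S`: `R` is a finitely generated free left
`S`-module, and there is an `(R,S)`-bimodule isomorphism `R → Hom_S^ℓ(R, _αS)`. -/
def IsFreeFrobeniusExtension {R : Type*} [Ring R] (S : Subring R) (α : S ≃+* S) : Prop :=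
  (∃ (n : ℕ) (x : Fin n → R), ∀ r : R, ∃! c : Fin n → S, r = ∑ i, ((c i : R) * x i)) ∧
  ∃ φ : R → R → S, IsLeftFrobeniusIso S α φ

/-- An additive map takes finite sums to finite sums. -/
private lemma aux_map_sum {M N : Type*} [AddCommGroup M] [AddCommGroup N] (g : M → N)
    (hg : ∀ a b : M, g (a + b) = g a + g b) {n : ℕ} (f : Fin n → M) :
    g (∑ i, f i) = ∑ i, g (f i) :=
  map_sum (AddMonoidHom.mk' g hg) f Finset.univ

/-- Let `S` be a subring of `R` containing the unit and `α` a ring automorphism of `S`.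
Then `R` is a free `α`-Frobenius extension of `S` if and only if there exists an
`α⁻¹`-associative form from `R` to `S` relative to which a dual free pair
`{x₁,…,xₙ}`, `{y₁,…,yₙ}` exists. -/
theorem isFreeFrobeniusExtension_iff_exists_dualFreePair
    {R : Type*} [Ring R] (S : Subring R) (α : S ≃+* S) :
    IsFreeFrobeniusExtension S α ↔
      ∃ B : R → R → S, IsAssocForm S (α.symm : S →+* S) B ∧
        ∃ (n : ℕ) (x y : Fin n → R),
          (∀ r : R, ∃ c : Fin n → S, r = ∑ i, ((c i : R) * x i)) ∧
          (∀ r : R, ∃ c : Fin n → S, r = ∑ i, (y i * (c i : R))) ∧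
          (∀ i j, B (x i) (y j) = if i = j then 1 else 0) := by
  constructor
  · rintro ⟨⟨n, x, hx⟩, φ, hφhom, hφadd, hφinj, hφsurj, hφbim⟩
    classical
    -- the coefficient function for the basis `x`
    set c : R → Fin n → S := fun r => (hx r).choose with hc_def
    have hc : ∀ r : R, r = ∑ i, ((c r i : R) * x i) := fun r => (hx r).choose_spec.1
    have hcu : ∀ (r : R) (d : Fin n → S), r = ∑ i, ((d i : R) * x i) → d = c r :=
      fun r d hd => (hx r).choose_spec.2 d hd
    have hcadd : ∀ r r' : R, c (r + r') = c r + c r' := by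
      intro r r'
      refine (hcu _ _ ?_).symm
      have : r + r' = ∑ i, (((c r i + c r' i : S) : R) * x i) := by
        conv_lhs => rw [hc r, hc r']
        rw [← Finset.sum_add_distrib]
        exact Finset.sum_congr rfl fun i _ => by push_cast; rw [add_mul]
      exact this
    have hcsmul : ∀ (s : S) (r : R), c ((s : R) * r) = fun i => s * c r i := by
      intro s r
      refine (hcu _ _ ?_).symm
      conv_lhs => rw [hc r]
      rw [Finset.mul_sum]
      exact Finset.sum_congr rfl fun i _ => by push_cast; rw [mul_assoc]
    have hcx : ∀ i j, c (x i) j = if i = j then 1 else 0 := by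
      intro i j
      set e : Fin n → S := fun k => if i = k then 1 else 0 with he
      have hxi : x i = ∑ k, ((e k : R) * x k) := by
        symm
        calc ∑ k, ((e k : R) * x k)
            = ∑ k, (if i = k then x k else 0) := by
              refine Finset.sum_congr rfl fun k _ => ?_
              by_cases h : i = k <;> simp [he, h]
          _ = x i := by simp
      have h := hcu (x i) e hxi
      rw [← h, he]
    -- dual left `S`-homs
    have hf : ∀ j, IsLeftSHom S α (fun r => α (c r j)) := by
      intro j
      refine ⟨fun r r' => ?_, fun s r => ?_⟩
      · show α (c (r + r') j) = α (c r j) + α (c r' j)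
        rw [hcadd]; simp [map_add]
      · show α (c ((s : R) * r) j) = α s * α (c r j)
        rw [hcsmul]; simp [map_mul]
    choose y hy using fun j => hφsurj _ (hf j)
    refine ⟨fun w z => α.symm (φ z w), ⟨?_, ?_, ?_, ?_, ?_⟩, n, x, y,
      fun r => ⟨c r, hc r⟩, ?_, ?_⟩
    · intro w w' z
      show α.symm (φ z (w + w')) = α.symm (φ z w) + α.symm (φ z w')
      rw [(hφhom z).1, map_add]
    · intro w z z'
      show α.symm (φ (z + z') w) = α.symm (φ z w) + α.symm (φ z' w)
      rw [hφadd, map_add]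
    · intro s w z
      show α.symm (φ z ((s : R) * w)) = s * α.symm (φ z w)
      rw [(hφhom z).2, map_mul, RingEquiv.symm_apply_apply]
    · intro w r z
      show α.symm (φ z (w * r)) = α.symm (φ (r * z) w)
      have h := hφbim r z 1 w
      simp only [Subring.coe_one, mul_one] at h
      rw [← h]
    · intro w z s
      show α.symm (φ (z * (s : R)) w) = α.symm (φ z w) * (α.symm : S →+* S) s
      have h := hφbim 1 z s w
      simp only [one_mul, mul_one] at h
      rw [h, map_mul]
      rfl
    · -- spanning by the `y i` on the right
      intro r
      refine ⟨fun i => φ r (x i), ?_⟩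
      have key : φ (∑ i, y i * ((φ r (x i) : S) : R)) = φ r := by
        funext w
        have hsumφ : φ (∑ i, y i * ((φ r (x i) : S) : R)) w
            = ∑ i, φ (y i * ((φ r (x i) : S) : R)) w :=
          aux_map_sum (fun t => φ t w) (fun a b => hφadd a b w) _
        rw [hsumφ]
        have h1 : ∀ i, φ (y i * ((φ r (x i) : S) : R)) w = α (c w i) * φ r (x i) := by
          intro i
          have h := hφbim 1 (y i) (φ r (x i)) w
          simp only [one_mul, mul_one] at h
          rw [h, congrFun (hy i) w]
        have h2 : φ r w = ∑ i, α (c w i) * φ r (x i) := by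
          conv_lhs => rw [hc w]
          rw [aux_map_sum (φ r) (hφhom r).1]
          exact Finset.sum_congr rfl fun i _ => (hφhom r).2 (c w i) (x i)
        rw [h2]
        exact Finset.sum_congr rfl fun i _ => h1 i
      exact (hφinj key).symm
    · intro i j
      show α.symm (φ (y j) (x i)) = if i = j then 1 else 0
      rw [congrFun (hy j) (x i), RingEquiv.symm_apply_apply, hcx]
  · rintro ⟨B, ⟨hB1, hB2, hBs, hBm, hBr⟩, n, x, y, hx, hy, hdual⟩
    classical
    have hcoef : ∀ (d : Fin n → S) (j : Fin n),
        B (∑ i, ((d i : R) * x i)) (y j) = d j := by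
      intro d j
      rw [aux_map_sum (fun t => B t (y j)) (fun a b => hB1 a b (y j))]
      have h : ∀ i, B ((d i : R) * x i) (y j) = d i * (if i = j then 1 else 0) :=
        fun i => by rw [hBs, hdual]
      rw [Finset.sum_congr rfl fun i _ => h i]
      simp
    -- key: every `z` is recovered from the form
    have hrep : ∀ z : R, z = ∑ i, y i * ((α (B (x i) z) : S) : R) := by
      intro z
      obtain ⟨d, hd⟩ := hy z
      have hdi : ∀ j, α (B (x j) z) = d j := by
        intro j
        have hs : B (x j) z = (α.symm : S →+* S) (d j) := by
          conv_lhs => rw [hd]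
          rw [aux_map_sum (B (x j)) (hB2 (x j))]
          have h : ∀ i, B (x j) (y i * (d i : R))
              = (if j = i then 1 else 0) * (α.symm : S →+* S) (d i) :=
            fun i => by rw [hBr, hdual]
          rw [Finset.sum_congr rfl fun i _ => h i]
          simp
        rw [hs]
        exact α.apply_symm_apply (d j)
      conv_lhs => rw [hd]
      exact Finset.sum_congr rfl fun i _ => by rw [hdi i]
    refine ⟨⟨n, x, fun r => ?_⟩, fun z w => α (B w z), ?_, ?_, ?_, ?_, ?_⟩
    · obtain ⟨d, hd⟩ := hx r
      refine ⟨d, hd, fun d' hd' => ?_⟩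
      funext j
      have h1 : d j = B r (y j) := by conv_rhs => rw [hd]; rw [hcoef]
      have h2 : d' j = B r (y j) := by conv_rhs => rw [hd']; rw [hcoef]
      rw [h2, ← h1]
    · intro z
      refine ⟨fun w w' => ?_, fun s w => ?_⟩
      · show α (B (w + w') z) = α (B w z) + α (B w' z)
        rw [hB1, map_add]
      · show α (B ((s : R) * w) z) = α s * α (B w z)
        rw [hBs, map_mul]
    · intro z z' w
      show α (B w (z + z')) = α (B w z) + α (B w z')
      rw [hB2, map_add]
    · intro z z' h
      have e : ∀ i, α (B (x i) z) = α (B (x i) z') := fun i => congrFun h (x i)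
      calc z = ∑ i, y i * ((α (B (x i) z) : S) : R) := hrep z
        _ = ∑ i, y i * ((α (B (x i) z') : S) : R) :=
            Finset.sum_congr rfl fun i _ => by rw [e i]
        _ = z' := (hrep z').symm
    · rintro f ⟨hfadd, hfs⟩
      refine ⟨∑ i, y i * ((f (x i) : S) : R), ?_⟩
      funext w
      obtain ⟨d, hd⟩ := hx w
      show α (B w (∑ i, y i * ((f (x i) : S) : R))) = f w
      have hBw : B w (∑ i, y i * ((f (x i) : S) : R))
          = ∑ i, B w (y i) * (α.symm : S →+* S) (f (x i)) := by
        rw [aux_map_sum (B w) (hB2 w)]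
        exact Finset.sum_congr rfl fun i _ => hBr w (y i) (f (x i))
      have hBwy : ∀ j, B w (y j) = d j := by
        intro j
        conv_lhs => rw [hd]
        exact hcoef d j
      rw [hBw, map_sum]
      have h : ∀ i, α (B w (y i) * (α.symm : S →+* S) (f (x i)))
          = α (d i) * f (x i) := fun i => by
        rw [map_mul, hBwy]
        congr 1
        exact α.apply_symm_apply (f (x i))
      rw [Finset.sum_congr rfl fun i _ => h i]
      conv_rhs => rw [hd]
      rw [aux_map_sum f hfadd]
      exact Finset.sum_congr rfl fun i _ => (hfs (d i) (x i)).symm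
    · intro r z s w
      show α (B w (r * z * (s : R))) = α (B (w * r) z) * s
      rw [mul_assoc, ← hBm, hBr, map_mul]
      congr 1
      exact α.apply_symm_apply s
end

section
/- Let R be a ring with unit, let S be a subring of R containing the unit of R, let α be a ring automorphism of S, and suppose φ_ℓ is an additive bijection from R onto the set of additive maps f : R → S satisfying f(s r) = α(s) f(r) for all s ∈ S, r ∈ R, such that φ_ℓ(r x s)(w) = φ_ℓ(x)(w r) s for all r, w, x ∈ R and s ∈ S. Then the map ⟨ , ⟩ : R × R → S defined by ⟨x, y⟩ = α⁻¹(φ_ℓ(y)(x)) is an α⁻¹-associative form from R to S. -/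
/-- Let `S` be a subring of `R` containing the unit, `α` a ring automorphism of `S`, and
`φ_ℓ : R → Hom_S^ℓ(R, _αS)` an `(R,S)`-bimodule isomorphism.  Then
`⟨x, y⟩ := α⁻¹(φ_ℓ(y)(x))` is an `α⁻¹`-associative form from `R` to `S`. -/
theorem assocForm_of_leftFrobeniusIso
    {R : Type*} [Ring R] (S : Subring R) (α : S ≃+* S)
    (φ : R → R → S) (hφ : IsLeftFrobeniusIso S α φ) :
    IsAssocForm S (α.symm : S →+* S) (fun x y => α.symm (φ y x)) := by
  obtain ⟨hhom, hadd, _, _, hbim⟩ := hφ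
  refine ⟨fun x x' y => ?_, fun x y y' => ?_, fun s x y => ?_, fun x r y => ?_,
    fun x y s => ?_⟩
  · simp [(hhom y).1]
  · simp [hadd]
  · dsimp only
    rw [(hhom y).2 s x, map_mul]
    simp
  · have := hbim r y 1 x
    simp only [OneMemClass.coe_one, mul_one] at this
    dsimp only
    rw [← this]
  · have := hbim 1 y s x
    simp only [one_mul, mul_one] at this
    dsimp only
    rw [this, map_mul]
    rfl
end

section
/- Let R be a ring with unit, let S be a subring of R containing the unit of R, and let α be a ring automorphism of S. Suppose ⟨ , ⟩ : R × R → S is an α⁻¹-associative form admitting a dual free pair {x₁, …, xₙ}, {y₁, …, yₙ}. Then, on the opposite ring Rᵒᵖ with subring Sᵒᵖ and automorphism α⁻¹, the form ⟨x, y⟩_op := α(⟨y, x⟩) is an α-associative form from Rᵒᵖ to Sᵒᵖ, and {y₁, …, yₙ}, {x₁, …, xₙ} (regarded in Rᵒᵖ) form a dual free pair relative to ⟨ , ⟩_op. Consequently, R is a free α-Frobenius extension of S if and only if Rᵒᵖ is a free α⁻¹-Frobenius extension of Sᵒᵖ. -/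
/-- `f : R → S` lies in `Hom_S^r(R, S_{α⁻¹})`: additive with `f(r s) = f(r) α⁻¹(s)`. -/
def IsRightSHom {R : Type*} [Ring R] (S : Subring R) (α : S ≃+* S) (f : R → S) : Prop :=
  (∀ r r' : R, f (r + r') = f r + f r') ∧
  (∀ (r : R) (s : S), f (r * (s : R)) = f r * α.symm s)

/-- `φ` is an additive bijection of `R` onto `Hom_S^r(R, S_{α⁻¹})` with the
`(S,R)`-bimodule condition `φ(s x r)(w) = s φ(x)(r w)`. -/
def IsRightFrobeniusIso {R : Type*} [Ring R] (S : Subring R) (α : S ≃+* S)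
    (φ : R → R → S) : Prop :=
  (∀ x : R, IsRightSHom S α (φ x)) ∧
  (∀ x x' w : R, φ (x + x') w = φ x w + φ x' w) ∧
  Function.Injective φ ∧
  (∀ f : R → S, IsRightSHom S α f → ∃ x : R, φ x = f) ∧
  (∀ (s : S) (x r : R) (w : R), φ ((s : R) * x * r) w = s * φ x (r * w))

/-- Unfolded in terms of `R` and `S`, this is the statement that the opposite ring `Rᵒᵖ`
is a free `α⁻¹`-Frobenius extension of `Sᵒᵖ`: `R` is a finitely generated free *right*
`S`-module and there is an `(S,R)`-bimodule isomorphism `R → Hom_S^r(R, S_{α⁻¹})`. -/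
def IsFreeFrobeniusExtensionOp {R : Type*} [Ring R] (S : Subring R) (α : S ≃+* S) : Prop :=
  (∃ (n : ℕ) (y : Fin n → R), ∀ r : R, ∃! c : Fin n → S, r = ∑ i, (y i * (c i : R))) ∧
  ∃ φ : R → R → S, IsRightFrobeniusIso S α φ

/-- Let `⟨ , ⟩` be an `α⁻¹`-associative form from `R` to `S` admitting a dual free pair
`{x₁,…,xₙ}`, `{y₁,…,yₙ}`.  Then on the opposite ring `Rᵒᵖ` (with subring `Sᵒᵖ` and
automorphism `α⁻¹`) the form `⟨x, y⟩_op := α(⟨y, x⟩)` is an `α`-associative form from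
`Rᵒᵖ` to `Sᵒᵖ` (the conditions below are the `β`-associativity conditions, with
`β = α`, written out for the opposite multiplications), and `{y₁,…,yₙ}`, `{x₁,…,xₙ}`
form a dual free pair relative to `⟨ , ⟩_op` in `Rᵒᵖ`.  Consequently, `R` is a free
`α`-Frobenius extension of `S` if and only if `Rᵒᵖ` is a free `α⁻¹`-Frobenius extension
of `Sᵒᵖ`. -/
theorem oppositeForm_dualFreePair_and_frobenius_iff
    {R : Type*} [Ring R] (S : Subring R) (α : S ≃+* S)
    (B : R → R → S) (hB : IsAssocForm S (α.symm : S →+* S) B)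
    (n : ℕ) (x y : Fin n → R)
    (hx : ∀ r : R, ∃ c : Fin n → S, r = ∑ i, ((c i : R) * x i))
    (hy : ∀ r : R, ∃ c : Fin n → S, r = ∑ i, (y i * (c i : R)))
    (hdual : ∀ i j, B (x i) (y j) = if i = j then 1 else 0) :
    -- `⟨x, y⟩_op := α(⟨y, x⟩)` is biadditive and `α`-associative on `Rᵒᵖ`:
    ((∀ a a' b : R, α (B b (a + a')) = α (B b a) + α (B b a')) ∧
     (∀ a b b' : R, α (B (b + b') a) = α (B b a) + α (B b' a)) ∧
     -- `⟨s ∘ a, b⟩_op = s ∘ ⟨a, b⟩_op` in `Rᵒᵖ`, `Sᵒᵖ`: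
     (∀ (s : S) (a b : R), α (B b (a * (s : R))) = α (B b a) * s) ∧
     -- `⟨a ∘ r, b⟩_op = ⟨a, r ∘ b⟩_op` in `Rᵒᵖ`:
     (∀ a r b : R, α (B b (r * a)) = α (B (b * r) a)) ∧
     -- `⟨a, b ∘ s⟩_op = ⟨a, b⟩_op ∘ α(s)` in `Rᵒᵖ`, `Sᵒᵖ`:
     (∀ (a b : R) (s : S), α (B ((s : R) * b) a) = α s * α (B b a))) ∧
    -- `{y₁,…,yₙ}`, `{x₁,…,xₙ}` form a dual free pair relative to `⟨ , ⟩_op` in `Rᵒᵖ`: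
    ((∀ r : R, ∃ c : Fin n → S, r = ∑ i, (y i * (c i : R))) ∧
     (∀ r : R, ∃ c : Fin n → S, r = ∑ i, ((c i : R) * x i)) ∧
     (∀ i j, α (B (x j) (y i)) = if i = j then 1 else 0)) ∧
    -- Consequently:
    (IsFreeFrobeniusExtension S α ↔ IsFreeFrobeniusExtensionOp S α) := by
  obtain ⟨hA1, hA2, hS, hM, hR⟩ := hB
  have hR' : ∀ (a b : R) (s : S), B a (b * (s : R)) = B a b * α.symm s := hR
  let L : R → (R →+ S) := fun w => AddMonoidHom.mk' (fun r => B r w) (fun a b => hA1 a b w)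
  let Rm : R → (R →+ S) := fun a => AddMonoidHom.mk' (fun r => B a r) (fun b c => hA2 a b c)
  have hsub1 : ∀ (a b w : R), B (a - b) w = B a w - B b w := fun a b w => map_sub (L w) a b
  have hsub2 : ∀ (w a b : R), B w (a - b) = B w a - B w b := fun w a b => map_sub (Rm w) a b
  have hsumα : ∀ {m : ℕ} (g : Fin m → S), α (∑ i, g i) = ∑ i, α (g i) :=
    fun g => map_sum α g Finset.univ
  have key1 : ∀ (c : Fin n → S) (j), B (∑ i, ((c i : R) * x i)) (y j) = c j := by
    intro c j
    rw [show B (∑ i, ((c i : R) * x i)) (y j) = ∑ i, B ((c i : R) * x i) (y j) from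
      map_sum (L (y j)) _ _]
    simp only [hS, hdual, mul_ite, mul_one, mul_zero]
    simp
  have key2 : ∀ (c : Fin n → S) (j), B (x j) (∑ i, (y i * (c i : R))) = α.symm (c j) := by
    intro c j
    rw [show B (x j) (∑ i, (y i * (c i : R))) = ∑ i, B (x j) (y i * (c i : R)) from
      map_sum (Rm (x j)) _ _]
    simp only [hR', hdual, ite_mul, one_mul, zero_mul]
    simp
  have inj1 : ∀ r : R, (∀ j, B r (y j) = 0) → r = 0 := by
    intro r h
    obtain ⟨c, hc⟩ := hx r
    have hc0 : ∀ j, c j = 0 := by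
      intro j
      have h1 := key1 c j
      rw [← hc, h j] at h1
      exact h1.symm
    rw [hc]
    simp [hc0]
  have inj2 : ∀ r : R, (∀ j, B (x j) r = 0) → r = 0 := by
    intro r h
    obtain ⟨c, hc⟩ := hy r
    have hc0 : ∀ j, c j = 0 := by
      intro j
      have h1 := key2 c j
      rw [← hc, h j] at h1
      have h2 : α.symm (c j) = α.symm 0 := by simpa using h1.symm
      exact α.symm.injective h2
    rw [hc]
    simp [hc0]
  refine ⟨⟨?_, ?_, ?_, ?_, ?_⟩, ⟨hy, hx, ?_⟩, ?_⟩
  · intro a a' b; rw [hA2, map_add]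
  · intro a b b'; rw [hA1, map_add]
  · intro s a b; rw [hR', map_mul, RingEquiv.apply_symm_apply]
  · intro a r b; rw [hM]
  · intro a b s; rw [hS, map_mul]
  · intro i j
    rw [hdual]
    by_cases h : i = j
    · subst h; simp
    · rw [if_neg (fun h' => h h'.symm), if_neg h, map_zero]
  · constructor
    · intro _
      constructor
      · refine ⟨n, y, fun r => ?_⟩
        obtain ⟨c, hc⟩ := hy r
        refine ⟨c, hc, fun d hd => ?_⟩
        funext j
        have h1 := key2 d j
        rw [← hd] at h1
        have h2 := key2 c j
        rw [← hc] at h2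
        exact α.symm.injective (h1.symm.trans h2)
      · refine ⟨fun a w => B a w, fun a => ⟨fun b c => hA2 a b c, fun w s => hR' a w s⟩,
          fun a a' w => hA1 a a' w, ?_, ?_, fun s a r w => ?_⟩
        · intro a a' h
          have hz : ∀ j, B (a - a') (y j) = 0 := by
            intro j
            rw [hsub1]
            have h2 : B a (y j) = B a' (y j) := congrFun h (y j)
            rw [h2, sub_self]
          exact sub_eq_zero.mp (inj1 _ hz)
        · intro f hf
          refine ⟨∑ i, ((f (y i) : R) * x i), ?_⟩
          funext w
          show B (∑ i, ((f (y i) : R) * x i)) w = f w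
          rw [show B (∑ i, ((f (y i) : R) * x i)) w = ∑ i, B ((f (y i) : R) * x i) w from
            map_sum (L w) _ _]
          simp only [hS]
          obtain ⟨c, hc⟩ := hy w
          have hcj : ∀ j, c j = α (B (x j) w) := by
            intro j
            have h1 := key2 c j
            rw [← hc] at h1
            rw [h1, RingEquiv.apply_symm_apply]
          let F : R →+ S := AddMonoidHom.mk' f (fun a b => hf.1 a b)
          have hfw : f w = ∑ i, f (y i * (c i : R)) := by
            rw [hc]
            exact map_sum F _ _
          rw [hfw]
          refine Finset.sum_congr rfl fun i _ => ?_
          rw [show f (y i * (c i : R)) = f (y i) * α.symm (c i) from hf.2 (y i) (c i),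
            hcj i, RingEquiv.symm_apply_apply]
        · show B ((s : R) * a * r) w = s * B a (r * w)
          rw [hM, hS]
    · intro _
      constructor
      · refine ⟨n, x, fun r => ?_⟩
        obtain ⟨c, hc⟩ := hx r
        refine ⟨c, hc, fun d hd => ?_⟩
        funext j
        have h1 := key1 d j
        rw [← hd] at h1
        have h2 := key1 c j
        rw [← hc] at h2
        exact h1.symm.trans h2
      · refine ⟨fun a w => α (B w a), fun a => ⟨?_, ?_⟩, ?_, ?_, ?_, ?_⟩
        · intro b c
          show α (B (b + c) a) = α (B b a) + α (B c a)
          rw [hA1, map_add]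
        · intro s w
          show α (B ((s : R) * w) a) = α s * α (B w a)
          rw [hS, map_mul]
        · intro a a' w
          show α (B w (a + a')) = α (B w a) + α (B w a')
          rw [hA2, map_add]
        · intro a a' h
          have hz : ∀ j, B (x j) (a - a') = 0 := by
            intro j
            rw [hsub2]
            have h1 : α (B (x j) a) = α (B (x j) a') := congrFun h (x j)
            rw [α.injective h1, sub_self]
          exact sub_eq_zero.mp (inj2 _ hz)
        · intro f hf
          refine ⟨∑ i, (y i * ((f (x i) : S) : R)), ?_⟩
          funext w
          show α (B w (∑ i, (y i * ((f (x i) : S) : R)))) = f w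
          rw [show B w (∑ i, (y i * ((f (x i) : S) : R))) =
              ∑ i, B w (y i * ((f (x i) : S) : R)) from map_sum (Rm w) _ _, hsumα]
          simp only [hR', map_mul, RingEquiv.apply_symm_apply]
          obtain ⟨c, hc⟩ := hx w
          have hcj : ∀ j, c j = B w (y j) := by
            intro j
            have h1 := key1 c j
            rw [← hc] at h1
            exact h1.symm
          let F : R →+ S := AddMonoidHom.mk' f (fun a b => hf.1 a b)
          have hfw : f w = ∑ i, f ((c i : R) * x i) := by
            rw [hc]
            exact map_sum F _ _
          rw [hfw]
          refine (Finset.sum_congr rfl fun i _ => ?_).symm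
          rw [show f ((c i : R) * x i) = α (c i) * f (x i) from hf.2 (c i) (x i), hcj i]
        · intro r a s w
          show α (B w (r * a * (s : R))) = α (B (w * r) a) * s
          rw [hR', map_mul, RingEquiv.apply_symm_apply, hM]
end

section
/- Let R be a ring with unit, let S be a subring of R containing the unit of R, and let α be a ring automorphism of S. Then the following two systems of conditions are equivalent: (I) R is a finitely generated free left S-module, and there exists an additive bijection φ_ℓ from R onto the set of additive maps f : R → S satisfying f(s r) = α(s) f(r), such that φ_ℓ(r x s)(w) = φ_ℓ(x)(w r) s for all r, w, x ∈ R and s ∈ S; (II) R is a finitely generated free right S-module, and there exists an additive bijection φ_r from R onto the set of additive maps f : R → S satisfying f(r s) = f(r) α⁻¹(s), such that φ_r(s x r)(w) = s φ_r(x)(r w) for all r, w, x ∈ R and s ∈ S. Moreover, the isomorphisms can be chosen so that φ_r(x)(y) = α⁻¹(φ_ℓ(y)(x)) for all x, y ∈ R. -/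
/-- System (I): `R` is a finitely generated free left `S`-module and there is an
`(R,S)`-bimodule isomorphism `R → Hom_S^ℓ(R, _αS)`. -/
def SystemI {R : Type*} [Ring R] (S : Subring R) (α : S ≃+* S) : Prop :=
  (∃ (n : ℕ) (x : Fin n → R), ∀ r : R, ∃! c : Fin n → S, r = ∑ i, ((c i : R) * x i)) ∧
  ∃ φ : R → R → S, IsLeftFrobeniusIso S α φ

/-- System (II): `R` is a finitely generated free right `S`-module and there is an
`(S,R)`-bimodule isomorphism `R → Hom_S^r(R, S_{α⁻¹})`. -/
def SystemII {R : Type*} [Ring R] (S : Subring R) (α : S ≃+* S) : Prop :=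
  (∃ (n : ℕ) (y : Fin n → R), ∀ r : R, ∃! c : Fin n → S, r = ∑ i, (y i * (c i : R))) ∧
  ∃ φ : R → R → S, IsRightFrobeniusIso S α φ

private lemma keyA {R : Type*} [Ring R] (S : Subring R) (α : S ≃+* S)
    (n : ℕ) (x : Fin n → R)
    (hx : ∀ r : R, ∃! c : Fin n → S, r = ∑ i, ((c i : R) * x i))
    (φ : R → R → S) (hφ : IsLeftFrobeniusIso S α φ) :
    (∃ (m : ℕ) (y : Fin m → R), ∀ r : R, ∃! d : Fin m → S, r = ∑ i, (y i * (d i : R))) ∧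
      IsRightFrobeniusIso S α (fun a b => α.symm (φ b a)) := by
  obtain ⟨hhom, hadd1, hinj, hsurj, hbi⟩ := hφ
  choose c hc hcu using hx
  have e2 : ∀ (z : R) (s : S) (w : R), φ (z * (s : R)) w = φ z w * s := by
    intro z s w; have := hbi 1 z s w; simpa using this
  have e1 : ∀ (r z w : R), φ (r * z) w = φ z (w * r) := by
    intro r z w; have := hbi r z 1 w; simpa using this
  have φsum2 : ∀ (z : R) {m : ℕ} (g : Fin m → R),
      φ z (∑ i, g i) = ∑ i, φ z (g i) := by
    intro z m g
    exact map_sum (AddMonoidHom.mk' (φ z) (hhom z).1) g Finset.univ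
  have φsum1 : ∀ (w : R) {m : ℕ} (g : Fin m → R),
      φ (∑ i, g i) w = ∑ i, φ (g i) w := by
    intro w m g
    exact map_sum (AddMonoidHom.mk' (fun z => φ z w) (fun a b => hadd1 a b w)) g Finset.univ
  have c_add : ∀ r r' i, c (r + r') i = c r i + c r' i := by
    intro r r' i
    have h : r + r' = ∑ i, (((c r i + c r' i : S)) : R) * x i := by
      push_cast
      simp only [add_mul]
      rw [Finset.sum_add_distrib, ← hc r, ← hc r']
    exact (congrFun (hcu (r + r') _ h) i).symm
  have c_smul : ∀ (s : S) (r : R) (i : Fin n), c ((s : R) * r) i = s * c r i := by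
    intro s r i
    have h : (s : R) * r = ∑ i, (((s * c r i : S)) : R) * x i := by
      calc (s : R) * r = ∑ i, (s : R) * ((c r i : R) * x i) := by
            rw [← Finset.mul_sum, ← hc r]
        _ = ∑ i, ((s * c r i : S) : R) * x i := by push_cast; simp [mul_assoc]
    exact (congrFun (hcu ((s : R) * r) _ h) i).symm
  have c_basis : ∀ j i, c (x j) i = if i = j then 1 else 0 := by
    intro j i
    have h : x j = ∑ i, (((if i = j then 1 else 0 : S)) : R) * x i := by
      simp [apply_ite (fun s : S => (s : R)), ite_mul]
    exact (congrFun (hcu (x j) _ h) i).symm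
  have hf : ∀ i : Fin n, IsLeftSHom S α (fun r => α (c r i)) := by
    intro i
    constructor
    · intro r r'
      show α (c (r + r') i) = α (c r i) + α (c r' i)
      rw [c_add]; exact map_add α _ _
    · intro s r
      show α (c ((s : R) * r) i) = α s * α (c r i)
      rw [c_smul]; exact map_mul α _ _
  choose y hy using fun i => hsurj _ (hf i)
  have hyw : ∀ (i : Fin n) (w : R), φ (y i) w = α (c w i) := fun i w => congrFun (hy i) w
  have key : ∀ r : R, r = ∑ i, y i * ((φ r (x i) : S) : R) := by
    intro r
    apply hinj
    funext w
    calc φ r w = φ r (∑ i, (c w i : R) * x i) := by rw [← hc w]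
      _ = ∑ i, φ r ((c w i : R) * x i) := φsum2 r _
      _ = ∑ i, α (c w i) * φ r (x i) := by simp only [(hhom r).2]
      _ = ∑ i, φ (y i) w * φ r (x i) := by simp only [hyw]
      _ = ∑ i, φ (y i * ((φ r (x i) : S) : R)) w := by simp only [e2]
      _ = φ (∑ i, y i * ((φ r (x i) : S) : R)) w := (φsum1 w _).symm
  have freeR : ∀ r : R, ∃! d : Fin n → S, r = ∑ i, (y i * (d i : R)) := by
    intro r
    refine ⟨fun i => φ r (x i), key r, ?_⟩
    intro d hd
    funext j
    calc d j = ∑ i, (if i = j then 1 else 0 : S) * d i := by simp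
      _ = ∑ i, α (c (x j) i) * d i := by
          simp only [c_basis, apply_ite α, map_one, map_zero]
      _ = ∑ i, φ (y i) (x j) * d i := by simp only [hyw]
      _ = ∑ i, φ (y i * (d i : R)) (x j) := by simp only [e2]
      _ = φ (∑ i, y i * (d i : R)) (x j) := (φsum1 _ _).symm
      _ = φ r (x j) := by rw [← hd]
  refine ⟨⟨n, y, freeR⟩, ?_, ?_, ?_, ?_, ?_⟩
  · intro a
    constructor
    · intro r r'
      show α.symm (φ (r + r') a) = α.symm (φ r a) + α.symm (φ r' a)
      rw [hadd1, map_add]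
    · intro r s
      show α.symm (φ (r * (s : R)) a) = α.symm (φ r a) * α.symm s
      rw [e2, map_mul]
  · intro a a' w
    show α.symm (φ w (a + a')) = α.symm (φ w a) + α.symm (φ w a')
    rw [(hhom w).1, map_add]
  · intro a a' h
    have h' : ∀ w, φ w a = φ w a' := by
      intro w
      have := congrFun h w
      exact α.symm.injective this
    have ca : ∀ (z : R) (i : Fin n), c z i = α.symm (φ (y i) z) := by
      intro z i; rw [hyw]; simp
    calc a = ∑ i, (c a i : R) * x i := hc a
      _ = ∑ i, (c a' i : R) * x i := by simp only [ca, h']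
      _ = a' := (hc a').symm
  · intro g hg
    refine ⟨∑ i, ((g (y i) : S) : R) * x i, ?_⟩
    funext w
    show α.symm (φ w (∑ i, ((g (y i) : S) : R) * x i)) = g w
    have step1 : φ w (∑ i, ((g (y i) : S) : R) * x i) = ∑ i, α (g (y i)) * φ w (x i) := by
      rw [φsum2]; simp only [(hhom w).2]
    rw [step1, map_sum]
    have gsum : ∀ {m : ℕ} (t : Fin m → R), g (∑ i, t i) = ∑ i, g (t i) := by
      intro m t
      exact map_sum (AddMonoidHom.mk' g hg.1) t Finset.univ
    have gw : g w = ∑ i, g (y i) * α.symm (φ w (x i)) := by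
      conv_lhs => rw [key w]
      rw [gsum]
      simp only [hg.2]
    rw [gw]
    congr 1
    funext i
    rw [map_mul, RingEquiv.symm_apply_apply]
  · intro s a r w
    show α.symm (φ w ((s : R) * a * r)) = s * α.symm (φ (r * w) a)
    rw [mul_assoc, (hhom w).2 s (a * r), ← e1 r w a, map_mul, RingEquiv.symm_apply_apply]

private lemma keyB {R : Type*} [Ring R] (S : Subring R) (α : S ≃+* S)
    (n : ℕ) (y : Fin n → R)
    (hy : ∀ r : R, ∃! d : Fin n → S, r = ∑ i, (y i * (d i : R)))
    (φ : R → R → S) (hφ : IsRightFrobeniusIso S α φ) :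
    (∃ (m : ℕ) (x : Fin m → R), ∀ r : R, ∃! c : Fin m → S, r = ∑ i, ((c i : R) * x i)) ∧
      IsLeftFrobeniusIso S α (fun a b => α (φ b a)) := by
  obtain ⟨hhom, hadd1, hinj, hsurj, hbi⟩ := hφ
  choose d hd hdu using hy
  have e2 : ∀ (s : S) (z w : R), φ ((s : R) * z) w = s * φ z w := by
    intro s z w; have := hbi s z 1 w; simpa using this
  have e1 : ∀ (z r w : R), φ (z * r) w = φ z (r * w) := by
    intro z r w; have := hbi 1 z r w; simpa using this
  have φsum2 : ∀ (z : R) {m : ℕ} (g : Fin m → R),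
      φ z (∑ i, g i) = ∑ i, φ z (g i) := by
    intro z m g
    exact map_sum (AddMonoidHom.mk' (φ z) (hhom z).1) g Finset.univ
  have φsum1 : ∀ (w : R) {m : ℕ} (g : Fin m → R),
      φ (∑ i, g i) w = ∑ i, φ (g i) w := by
    intro w m g
    exact map_sum (AddMonoidHom.mk' (fun z => φ z w) (fun a b => hadd1 a b w)) g Finset.univ
  have d_add : ∀ r r' i, d (r + r') i = d r i + d r' i := by
    intro r r' i
    have h : r + r' = ∑ i, y i * (((d r i + d r' i : S)) : R) := by
      push_cast
      simp only [mul_add]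
      rw [Finset.sum_add_distrib, ← hd r, ← hd r']
    exact (congrFun (hdu (r + r') _ h) i).symm
  have d_smul : ∀ (r : R) (s : S) (i : Fin n), d (r * (s : R)) i = d r i * s := by
    intro r s i
    have h : r * (s : R) = ∑ i, y i * (((d r i * s : S)) : R) := by
      calc r * (s : R) = ∑ i, (y i * (d r i : R)) * (s : R) := by
            rw [← Finset.sum_mul, ← hd r]
        _ = ∑ i, y i * ((d r i * s : S) : R) := by push_cast; simp [mul_assoc]
    exact (congrFun (hdu (r * (s : R)) _ h) i).symm
  have d_basis : ∀ j i, d (y j) i = if i = j then 1 else 0 := by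
    intro j i
    have h : y j = ∑ i, y i * (((if i = j then 1 else 0 : S)) : R) := by
      simp [apply_ite (fun s : S => (s : R)), mul_ite]
    exact (congrFun (hdu (y j) _ h) i).symm
  have hg : ∀ i : Fin n, IsRightSHom S α (fun r => α.symm (d r i)) := by
    intro i
    constructor
    · intro r r'
      show α.symm (d (r + r') i) = α.symm (d r i) + α.symm (d r' i)
      rw [d_add]; exact map_add α.symm _ _
    · intro r s
      show α.symm (d (r * (s : R)) i) = α.symm (d r i) * α.symm s
      rw [d_smul]; exact map_mul α.symm _ _
  choose x hx using fun i => hsurj _ (hg i)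
  have hxw : ∀ (i : Fin n) (w : R), φ (x i) w = α.symm (d w i) := fun i w => congrFun (hx i) w
  have key : ∀ r : R, r = ∑ i, ((φ r (y i) : S) : R) * x i := by
    intro r
    apply hinj
    funext w
    calc φ r w = φ r (∑ i, y i * (d w i : R)) := by rw [← hd w]
      _ = ∑ i, φ r (y i * (d w i : R)) := φsum2 r _
      _ = ∑ i, φ r (y i) * α.symm (d w i) := by simp only [(hhom r).2]
      _ = ∑ i, φ r (y i) * φ (x i) w := by simp only [hxw]
      _ = ∑ i, φ (((φ r (y i) : S) : R) * x i) w := by simp only [e2]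
      _ = φ (∑ i, ((φ r (y i) : S) : R) * x i) w := (φsum1 w _).symm
  have freeL : ∀ r : R, ∃! c : Fin n → S, r = ∑ i, ((c i : R) * x i) := by
    intro r
    refine ⟨fun i => φ r (y i), key r, ?_⟩
    intro c hc
    funext j
    calc c j = ∑ i, c i * (if i = j then 1 else 0 : S) := by simp
      _ = ∑ i, c i * α.symm (d (y j) i) := by
          simp only [d_basis, apply_ite α.symm, map_one, map_zero]
      _ = ∑ i, c i * φ (x i) (y j) := by simp only [hxw]
      _ = ∑ i, φ ((c i : R) * x i) (y j) := by simp only [e2]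
      _ = φ (∑ i, (c i : R) * x i) (y j) := (φsum1 _ _).symm
      _ = φ r (y j) := by rw [← hc]
  refine ⟨⟨n, x, freeL⟩, ?_, ?_, ?_, ?_, ?_⟩
  · intro a
    constructor
    · intro r r'
      show α (φ (r + r') a) = α (φ r a) + α (φ r' a)
      rw [hadd1, map_add]
    · intro s r
      show α (φ ((s : R) * r) a) = α s * α (φ r a)
      rw [e2, map_mul]
  · intro a a' w
    show α (φ w (a + a')) = α (φ w a) + α (φ w a')
    rw [(hhom w).1, map_add]
  · intro a a' h
    have h' : ∀ w, φ w a = φ w a' := by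
      intro w
      have := congrFun h w
      exact α.injective this
    have da : ∀ (z : R) (i : Fin n), d z i = α (φ (x i) z) := by
      intro z i; rw [hxw]; simp
    calc a = ∑ i, y i * (d a i : R) := hd a
      _ = ∑ i, y i * (d a' i : R) := by simp only [da, h']
      _ = a' := (hd a').symm
  · intro f hf
    refine ⟨∑ i, y i * ((f (x i) : S) : R), ?_⟩
    funext w
    show α (φ w (∑ i, y i * ((f (x i) : S) : R))) = f w
    have step1 : φ w (∑ i, y i * ((f (x i) : S) : R)) =
        ∑ i, φ w (y i) * α.symm (f (x i)) := by
      rw [φsum2]; simp only [(hhom w).2]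
    rw [step1, map_sum]
    have fsum : ∀ {m : ℕ} (t : Fin m → R), f (∑ i, t i) = ∑ i, f (t i) := by
      intro m t
      exact map_sum (AddMonoidHom.mk' f hf.1) t Finset.univ
    have fw : f w = ∑ i, α (φ w (y i)) * f (x i) := by
      conv_lhs => rw [key w]
      rw [fsum]
      simp only [hf.2]
    rw [fw]
    congr 1
    funext i
    rw [map_mul, RingEquiv.apply_symm_apply]
  · intro r a s w
    show α (φ w (r * a * (s : R))) = α (φ (w * r) a) * s
    rw [(hhom w).2 (r * a) s, ← e1 w r a, map_mul, RingEquiv.apply_symm_apply]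

/-- Let `S` be a subring of `R` containing the unit and `α` a ring automorphism of `S`.
Then system (I) (the left-module criterion for `R` to be a free `α`-Frobenius extension
of `S`) and system (II) (the right-module criterion) are equivalent.  Moreover the
isomorphisms can be chosen so that `φ_r(x)(y) = α⁻¹(φ_ℓ(y)(x))` for all `x, y ∈ R`. -/
theorem systemI_iff_systemII
    {R : Type*} [Ring R] (S : Subring R) (α : S ≃+* S) :
    (SystemI S α ↔ SystemII S α) ∧
      (SystemI S α →
        ∃ (φℓ φr : R → R → S), IsLeftFrobeniusIso S α φℓ ∧ IsRightFrobeniusIso S α φr ∧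
          ∀ x y : R, φr x y = α.symm (φℓ y x)) := by
  constructor
  · constructor
    · rintro ⟨⟨n, x, hx⟩, φ, hφ⟩
      obtain ⟨hfree, hiso⟩ := keyA S α n x hx φ hφ
      exact ⟨hfree, _, hiso⟩
    · rintro ⟨⟨n, y, hy⟩, φ, hφ⟩
      obtain ⟨hfree, hiso⟩ := keyB S α n y hy φ hφ
      exact ⟨hfree, _, hiso⟩
  · rintro ⟨⟨n, x, hx⟩, φ, hφ⟩
    exact ⟨φ, fun a b => α.symm (φ b a), hφ, (keyA S α n x hx φ hφ).2, fun _ _ => rfl⟩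
end
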